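/- arXiv:2504.11865 — 5 statements merged into one kernel-verified Lean document; each statement's English description precedes it below -/
import Mathlib

section
/- For the Apéry polynomial f_n(x) = Σ_{k=0}^n C(n,k)^2 C(n+k,k) x^k, the derivative at 1 satisfies 5n f_n'(1) = (n+1)^2 f_{n+1}(1) − (n+1)(8n+3) f_n(1) for all n ≥ 1. -/
/-!
Both `f_n(1)` and `f_n'(1)` are sums of the hypergeometric term `a(n,k) = C(n,k)^2 C(n+k,k)`,
and the recurrence comes from creative telescoping: with `G(n,k) = k (7n+7-5k) C(n,k-1)^2 C(n+k,k)`,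
`(5nk + (n+1)(8n+3)) a(n,k) - (n+1)^2 a(n+1,k) = G(n,k+1) - G(n,k)` for `0 ≤ k ≤ n+1`.
Dividing by `C(n,k-1)^2 C(n+k,k)` turns this into an identity of rational functions of `n` and `k`,
and summing over `k` telescopes since `G(n,0) = G(n,n+2) = 0`.
-/

open Polynomial

/-- The Apéry polynomial. -/
noncomputable def aperyPoly (n : ℕ) : Polynomial ℝ :=
  ∑ k ∈ Finset.range (n + 1),
    C (((n.choose k) ^ 2 * ((n + k).choose k) : ℕ) : ℝ) * X ^ k

open Finset

def aperyTerm (n k : ℕ) : ℕ := n.choose k ^ 2 * (n + k).choose k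

theorem aperyTerm_eq_zero_of_lt {n k : ℕ} (h : n < k) : aperyTerm n k = 0 := by
  simp [aperyTerm, Nat.choose_eq_zero_of_lt h]

section Telescoping

variable {K : Type*} [Field K]

/-- Zeilberger's certificate for the recurrence; at `k = 0` the truncated `k - 1` is harmless
because of the factor `k`. -/
def aperyCertificate (n k : ℕ) : K :=
  k * (7 * n + 7 - 5 * k) * ((n.choose (k - 1) : K) ^ 2 * (n + k).choose k)

/-- `a, b, c, d, e, f` stand for
`C(n,k), C(n+k,k), C(n,k-1), C(n+1,k), C(n+k+1,k), C(n+k+1,k+1)`. -/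
theorem aperyTerm_telescoping_of_ratios {n k a b c d e f : K} (hk : k ≠ 0) (hn : n + 1 ≠ 0)
    (hk' : k + 1 ≠ 0) (ha : a * k = c * (n + 1 - k)) (hd : (n + 1) * c = d * k)
    (he : b * (n + k + 1) = e * (n + 1)) (hf : (n + k + 1) * b = f * (k + 1)) :
    (5 * n * k + (n + 1) * (8 * n + 3)) * (a ^ 2 * b) + k * (7 * n + 7 - 5 * k) * (c ^ 2 * b)
      = (n + 1) ^ 2 * (d ^ 2 * e) + (k + 1) * (7 * n + 7 - 5 * (k + 1)) * (a ^ 2 * f) := by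
  rw [← eq_div_iff hk] at ha
  rw [eq_comm, ← eq_div_iff hk] at hd
  rw [eq_comm, ← eq_div_iff hn] at he
  rw [eq_comm, ← eq_div_iff hk'] at hf
  subst ha hd he hf
  field_simp
  ring

variable [CharZero K]

theorem aperyTerm_telescoping (n k : ℕ) (hk : k ≤ n + 1) :
    (5 * n * k + (n + 1) * (8 * n + 3)) * (aperyTerm n k : K) + aperyCertificate n k
      = (n + 1) ^ 2 * (aperyTerm (n + 1) k : K) + aperyCertificate n (k + 1) := by
  obtain _ | m := k
  · simp only [aperyTerm, aperyCertificate, Nat.choose_zero_right, zero_add,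
      Nat.choose_one_right, tsub_self]
    push_cast
    ring
  have ha := Nat.choose_succ_right_eq n m
  have hd := Nat.add_one_mul_choose_eq n m
  have he := Nat.choose_mul_succ_eq (n + (m + 1)) (m + 1)
  have hf := Nat.add_one_mul_choose_eq (n + (m + 1)) (m + 1)
  rw [show n + (m + 1) + 1 - (m + 1) = n + 1 by omega] at he
  simp only [aperyTerm, aperyCertificate, Nat.add_sub_cancel,
    show n + 1 + (m + 1) = n + (m + 1) + 1 by omega]
  push_cast
  refine aperyTerm_telescoping_of_ratios (n := (n : K)) (k := (m : K) + 1)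
    (Nat.cast_add_one_ne_zero m) (Nat.cast_add_one_ne_zero n)
    (by exact_mod_cast (m + 1).succ_ne_zero) ?_ (by exact_mod_cast hd) (by exact_mod_cast he) ?_
  · rw [show (n : K) + 1 - (m + 1) = ((n - m : ℕ) : K) by
      push_cast [show m ≤ n by omega]; ring]
    exact_mod_cast ha
  · rw [← Nat.add_assoc] at hf
    exact_mod_cast hf

theorem sum_aperyTerm_recurrence (n : ℕ) :
    ∑ k ∈ range (n + 2), (5 * n * k + (n + 1) * (8 * n + 3)) * (aperyTerm n k : K)
      = (n + 1) ^ 2 * ∑ k ∈ range (n + 2), (aperyTerm (n + 1) k : K) := by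
  have hG₀ : aperyCertificate (K := K) n 0 = 0 := by simp [aperyCertificate]
  have hG : aperyCertificate (K := K) n (n + 2) = 0 := by simp [aperyCertificate]
  calc _ = ∑ k ∈ range (n + 2), ((n + 1) ^ 2 * (aperyTerm (n + 1) k : K)
          + (aperyCertificate n (k + 1) - aperyCertificate n k)) := by
        refine sum_congr rfl fun k hk ↦ ?_
        linear_combination
          aperyTerm_telescoping (K := K) n k (Nat.lt_succ_iff.mp (mem_range.mp hk))
    _ = _ := by rw [sum_add_distrib, sum_range_sub, hG, hG₀, sub_zero, add_zero, mul_sum]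

end Telescoping

theorem aperyPoly_eval_one (n : ℕ) :
    (aperyPoly n).eval 1 = ∑ k ∈ range (n + 1), (aperyTerm n k : ℝ) := by
  simp [aperyPoly, aperyTerm, eval_finsetSum]

theorem derivative_aperyPoly_eval_one (n : ℕ) :
    (derivative (aperyPoly n)).eval 1 = ∑ k ∈ range (n + 1), k * (aperyTerm n k : ℝ) := by
  rw [aperyPoly, derivative_sum, eval_finsetSum]
  refine sum_congr rfl fun k _ ↦ ?_
  rw [derivative_C_mul_X_pow]
  simp [aperyTerm, mul_comm]

theorem apery_deriv_recurrence_general (n : ℕ) :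
    5 * (n : ℝ) * (derivative (aperyPoly n)).eval 1 =
      ((n : ℝ) + 1) ^ 2 * (aperyPoly (n + 1)).eval 1
        - ((n : ℝ) + 1) * (8 * n + 3) * (aperyPoly n).eval 1 := by
  have h := sum_aperyTerm_recurrence (K := ℝ) n
  rw [sum_range_succ, aperyTerm_eq_zero_of_lt (lt_add_one n), Nat.cast_zero, mul_zero,
    add_zero] at h
  rw [aperyPoly_eval_one, aperyPoly_eval_one, derivative_aperyPoly_eval_one, ← h, mul_sum,
    mul_sum, ← sum_sub_distrib]
  refine sum_congr rfl fun k _ ↦ ?_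
  ring

theorem apery_deriv_recurrence (n : ℕ) (hn : 1 ≤ n) :
    5 * (n : ℝ) * (derivative (aperyPoly n)).eval 1 =
      ((n : ℝ) + 1) ^ 2 * (aperyPoly (n + 1)).eval 1
        - ((n : ℝ) + 1) * (8 * n + 3) * (aperyPoly n).eval 1 :=
  apery_deriv_recurrence_general n
end

section
/- For the Apéry polynomial f_n(x) = Σ_{k=0}^n C(n,k)^2 C(n+k,k) x^k, the second derivative at 1 satisfies 5n(n−1) f_n''(1) = −(n^2+3n−1)(n+1)^2 f_{n+1}(1) + (n+1)(13n^3+27n^2+n−3) f_n(1) for all n ≥ 2. -/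
open Polynomial

/-!
Creative telescoping. Write `a n k = C(n,k)² C(n+k,k)`. The combination
`5n(n-1) k(k-1) a n k + (n²+3n-1)(n+1)² a (n+1) k - (n+1)(13n³+27n²+n-3) a n k`
is `G n (k+1) - G n k` for the certificate `G n k = P(n,k) k³/(n+1)² · C(n+1,k)² C(n+k,k)`,
with `P` quadratic in `k`.
Relative to `C(n+1,k)² C(n+k,k)` every binomial ratio that occurs has denominator `n+1` or `k+1`,
so the identity is a polynomial identity, valid uniformly for `k ≤ n+1`. Summing over
`k < n+2` telescopes to `G n (n+2) - G n 0 = 0`, and the three sums are `f_n''(1)`,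
`f_{n+1}(1)` and `f_n(1)`.
-/

open Finset

lemma eval_one_derivative_derivative_C_mul_X_pow {R : Type*} [CommRing R] (c : R) (k : ℕ) :
    (derivative (derivative (C c * X ^ k))).eval 1 = k * (k - 1) * c := by
  match k with
  | 0 => simp
  | 1 => simp
  | m + 2 =>
    simp
    ring

def aperyCoeff (n k : ℕ) : ℕ := n.choose k ^ 2 * (n + k).choose k

lemma aperyPoly_eq_sum_range {n N : ℕ} (hN : n < N) :
    aperyPoly n = ∑ k ∈ range N, C (aperyCoeff n k : ℝ) * X ^ k := by
  refine sum_subset (range_subset_range.2 hN) fun k hkN hkn => ?_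
  simp_all [Nat.choose_eq_zero_of_lt]

lemma eval_one_aperyPoly {n N : ℕ} (hN : n < N) :
    (aperyPoly n).eval 1 = ∑ k ∈ range N, (aperyCoeff n k : ℝ) := by
  simp [aperyPoly_eq_sum_range hN, eval_finsetSum]

lemma eval_one_derivative_derivative_aperyPoly {n N : ℕ} (hN : n < N) :
    (derivative (derivative (aperyPoly n))).eval 1 =
      ∑ k ∈ range N, (k : ℝ) * (k - 1) * aperyCoeff n k := by
  simp only [aperyPoly_eq_sum_range hN, derivative_sum, eval_finsetSum,
    eval_one_derivative_derivative_C_mul_X_pow]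

-- Produced by Zeilberger's algorithm; the factor `k³` makes it vanish at `k = 0`.
noncomputable def aperyCert (n k : ℕ) : ℝ :=
  (7 - 19 * n - 38 * n ^ 2 - 12 * n ^ 3 + (15 * n ^ 2 + 25 * n - 5) * k - 5 * n * k ^ 2) *
    k ^ 3 / (n + 1) ^ 2 * (n + 1).choose k ^ 2 * (n + k).choose k

lemma aperyCert_sub_aperyCert {n k : ℕ} (hk : k ≤ n + 1) :
    aperyCert n (k + 1) - aperyCert n k =
      5 * n * (n - 1) * (k * (k - 1) * aperyCoeff n k)
        + (n ^ 2 + 3 * n - 1) * (n + 1) ^ 2 * aperyCoeff (n + 1) k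
        - (n + 1) * (13 * n ^ 3 + 27 * n ^ 2 + n - 3) * aperyCoeff n k := by
  have hn : (n + 1 : ℝ) ≠ 0 := by positivity
  have hk' : (k + 1 : ℝ) ≠ 0 := by positivity
  have choose_n : (n.choose k : ℝ) = (n + 1).choose k * (n + 1 - k) / (n + 1) := by
    have h := congrArg (Nat.cast (R := ℝ)) (Nat.choose_mul_succ_eq n k)
    push_cast [Nat.cast_sub hk] at h
    rw [eq_div_iff hn, h]
  have choose_diag : ((n + 1 + k).choose k : ℝ) = (n + k).choose k * (n + 1 + k) / (n + 1) := by
    have h := Nat.choose_mul_succ_eq (n + k) k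
    rw [show n + k + 1 - k = n + 1 by omega, add_right_comm] at h
    rw [eq_div_iff hn]
    exact_mod_cast h.symm
  have choose_n_succ :
      ((n + 1).choose (k + 1) : ℝ) = (n + 1).choose k * (n + 1 - k) / (k + 1) := by
    have h := congrArg (Nat.cast (R := ℝ)) (Nat.choose_succ_right_eq (n + 1) k)
    push_cast [Nat.cast_sub hk] at h
    rw [eq_div_iff hk', h]
  have choose_diag_succ :
      ((n + (k + 1)).choose (k + 1) : ℝ) = (n + k).choose k * (n + k + 1) / (k + 1) := by
    have h := congrArg (Nat.cast (R := ℝ)) (Nat.add_one_mul_choose_eq (n + k) k)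
    push_cast at h
    rw [eq_div_iff hk', ← add_assoc, ← h]
    ring
  simp only [aperyCert, aperyCoeff]
  push_cast
  rw [choose_n, choose_diag, choose_n_succ, choose_diag_succ]
  field_simp
  ring

theorem apery_second_deriv_recurrence_general (n : ℕ) :
    5 * (n : ℝ) * ((n : ℝ) - 1) * (derivative (derivative (aperyPoly n))).eval 1 =
      -(((n : ℝ) ^ 2 + 3 * n - 1) * ((n : ℝ) + 1) ^ 2) * (aperyPoly (n + 1)).eval 1
        + ((n : ℝ) + 1) * (13 * (n : ℝ) ^ 3 + 27 * n ^ 2 + n - 3) * (aperyPoly n).eval 1 := by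
  have telescoped := sum_range_sub (aperyCert n) (n + 2)
  rw [sum_congr rfl fun k hk => aperyCert_sub_aperyCert (Nat.lt_succ_iff.mp (mem_range.mp hk))]
    at telescoped
  simp only [sum_add_distrib, sum_sub_distrib, ← mul_sum] at telescoped
  rw [eval_one_derivative_derivative_aperyPoly (Nat.lt_succ_of_lt n.lt_succ_self),
    eval_one_aperyPoly (Nat.lt_succ_of_lt n.lt_succ_self), eval_one_aperyPoly (n + 1).lt_succ_self]
  have boundary : aperyCert n (n + 2) - aperyCert n 0 = 0 := by
    simp [aperyCert, Nat.choose_succ_self]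
  linear_combination telescoped.trans boundary

theorem apery_second_deriv_recurrence (n : ℕ) (hn : 2 ≤ n) :
    5 * (n : ℝ) * ((n : ℝ) - 1) * (derivative (derivative (aperyPoly n))).eval 1 =
      -(((n : ℝ) ^ 2 + 3 * n - 1) * ((n : ℝ) + 1) ^ 2) * (aperyPoly (n + 1)).eval 1
        + ((n : ℝ) + 1) * (13 * (n : ℝ) ^ 3 + 27 * n ^ 2 + n - 3) * (aperyPoly n).eval 1 :=
  apery_second_deriv_recurrence_general n
end

section
/- For the Franel polynomial g_n(x) = Σ_{k=0}^n C(n,k)^3 x^k, one has (6n^2+4n+1) g_n(1) = (n+1) g_{n+1}'(1) + (7n−5) g_n'(1) − 6 g_n''(1) for all n ≥ 0. -/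
/-!
Evaluating at `x = 1`, the identity says that `∑ₖ t(k) = 0`, where
`t(k) = (6n² + 4n + 1 - (7n - 5)k + 6k(k - 1)) C(n,k)³ - (n + 1) k C(n+1,k)³`.
This is proved by creative telescoping: `(n + 1)³ t(k) = H(k + 1) - H(k)` for the certificate
`H(k) = k³ (3k² - 8k(n + 1) + 6(n + 1)²) C(n+1,k)³` (as produced by Zeilberger's algorithm),
which vanishes at `k = 0` and `k = n + 2`.
-/

open Polynomial

/-- The Franel polynomial. -/
noncomputable def franelPoly (n : ℕ) : Polynomial ℝ :=
  ∑ k ∈ Finset.range (n + 1), C (((n.choose k) ^ 3 : ℕ) : ℝ) * X ^ k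

open Finset

lemma franelPoly_eq_sum_range_of_lt {n m : ℕ} (h : n < m) :
    franelPoly n = ∑ k ∈ range m, C (((n.choose k) ^ 3 : ℕ) : ℝ) * X ^ k := by
  refine sum_subset (range_subset_range.mpr h) fun k _ hk => ?_
  simp [Nat.choose_eq_zero_of_lt (not_lt.mp (mt mem_range.mpr hk))]

section EvalOne

variable {R : Type*} [CommRing R] (a : ℕ → R) (m : ℕ)

lemma eval_one_sum_C_mul_X_pow :
    (∑ k ∈ range m, C (a k) * X ^ k).eval 1 = ∑ k ∈ range m, a k := by
  simp [eval_finsetSum]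

lemma eval_one_derivative_sum_C_mul_X_pow :
    (derivative (∑ k ∈ range m, C (a k) * X ^ k)).eval 1 = ∑ k ∈ range m, (k : R) * a k := by
  simp only [derivative_sum, derivative_C_mul_X_pow, eval_finsetSum]
  exact sum_congr rfl fun k _ => by simp [mul_comm]

lemma eval_one_derivative_derivative_sum_C_mul_X_pow :
    (derivative (derivative (∑ k ∈ range m, C (a k) * X ^ k))).eval 1
      = ∑ k ∈ range m, (k : R) * ((k : R) - 1) * a k := by
  simp only [derivative_sum, derivative_C_mul_X_pow, eval_finsetSum]
  refine sum_congr rfl fun k _ => ?_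
  cases k with
  | zero => simp
  | succ k => simp; ring

end EvalOne

lemma cast_add_one_mul_choose (n k : ℕ) :
    ((n : ℝ) + 1) * n.choose k = ((n : ℝ) + 1 - k) * (n + 1).choose k := by
  rcases le_or_gt k (n + 1) with hk | hk
  · have h := congrArg (Nat.cast : ℕ → ℝ) (Nat.choose_mul_succ_eq n k)
    push_cast [Nat.cast_sub hk] at h
    linarith
  · simp [Nat.choose_eq_zero_of_lt hk, Nat.choose_eq_zero_of_lt (Nat.lt_of_succ_lt hk)]

lemma cast_succ_mul_choose_succ (n k : ℕ) :
    ((k : ℝ) + 1) * (n + 1).choose (k + 1) = ((n : ℝ) + 1) * n.choose k := by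
  have h := congrArg (Nat.cast : ℕ → ℝ) (Nat.add_one_mul_choose_eq n k)
  push_cast at h
  linarith

noncomputable def franelCertificate (n k : ℕ) : ℝ :=
  (k : ℝ) ^ 3 * (3 * (k : ℝ) ^ 2 - 8 * k * ((n : ℝ) + 1) + 6 * ((n : ℝ) + 1) ^ 2)
    * ((n + 1).choose k : ℝ) ^ 3

lemma franelCertificate_succ_sub (n k : ℕ) :
    franelCertificate n (k + 1) - franelCertificate n k
      = ((n : ℝ) + 1) ^ 3 *
        ((6 * (n : ℝ) ^ 2 + 4 * n + 1 - (7 * n - 5) * k + 6 * k * ((k : ℝ) - 1))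
            * (n.choose k : ℝ) ^ 3
          - ((n : ℝ) + 1) * k * ((n + 1).choose k : ℝ) ^ 3) := by
  have h₁ := congrArg (· ^ 3) (cast_add_one_mul_choose n k)
  have h₂ := congrArg (· ^ 3) (cast_succ_mul_choose_succ n k)
  unfold franelCertificate
  push_cast
  linear_combination
    (3 * ((k : ℝ) + 1) ^ 2 - 8 * ((k : ℝ) + 1) * ((n : ℝ) + 1) + 6 * ((n : ℝ) + 1) ^ 2) * h₂
    - (6 * (n : ℝ) ^ 2 + 4 * n + 1 - (7 * n - 5) * k + 6 * k * ((k : ℝ) - 1)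
      - (3 * ((k : ℝ) + 1) ^ 2 - 8 * ((k : ℝ) + 1) * ((n : ℝ) + 1) + 6 * ((n : ℝ) + 1) ^ 2)) * h₁

lemma sum_franel_telescope (n : ℕ) :
    ∑ k ∈ range (n + 2),
      ((6 * (n : ℝ) ^ 2 + 4 * n + 1 - (7 * n - 5) * k + 6 * k * ((k : ℝ) - 1))
          * (n.choose k : ℝ) ^ 3
        - ((n : ℝ) + 1) * k * ((n + 1).choose k : ℝ) ^ 3) = 0 := by
  refine (mul_eq_zero.mp ?_).resolve_left (pow_ne_zero 3 (Nat.cast_add_one_ne_zero n))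
  simp only [mul_sum, ← franelCertificate_succ_sub, sum_range_sub]
  simp [franelCertificate]

theorem franel_mixed_recurrence' (n : ℕ) :
    (6 * (n : ℝ) ^ 2 + 4 * n + 1) * (franelPoly n).eval 1 =
      ((n : ℝ) + 1) * (derivative (franelPoly (n + 1))).eval 1
        + (7 * (n : ℝ) - 5) * (derivative (franelPoly n)).eval 1
        - 6 * (derivative (derivative (franelPoly n))).eval 1 := by
  rw [franelPoly_eq_sum_range_of_lt (Nat.lt_succ_of_lt (Nat.lt_succ_self n))]
  simp only [franelPoly, Nat.cast_pow, eval_one_sum_C_mul_X_pow,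
    eval_one_derivative_sum_C_mul_X_pow, eval_one_derivative_derivative_sum_C_mul_X_pow]
  rw [← sub_eq_zero, ← sum_franel_telescope n]
  simp only [mul_sum, ← sum_sub_distrib, ← sum_add_distrib]
  exact sum_congr rfl fun k _ => by ring
end

section
/- The ratio of consecutive Apéry numbers converges: lim_{n→∞} f_{n+1}/f_n = (11 + 5√5)/2, where f_n = Σ_{k=0}^n C(n,k)^2 C(n+k,k). -/
/-!
Creative telescoping: the `k`-th summand of
`(n+2)² f(n+2) - (11n² + 33n + 25) f(n+1) - (n+1)² f(n)` is `G(n, k+1) - G(n, k)` for Zeilberger's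
certificate `G`, so the sum telescopes to zero and the Apéry numbers satisfy Apéry's recurrence.
The ratios `r n = f(n+1) / f(n)` then satisfy `r (n+1) = a n + b n / r n` with `a n → 11`, `b n → 1`
and `r n ≥ 1`, while `L = (11 + 5√5)/2` is the positive root of `L = 11 + 1/L`. Hence `|r n - L|`
shrinks by the factor `1/L < 1` at each step, up to errors that tend to zero, and `r n → L`.
-/

/-- Apéry numbers -/
def apery (n : ℕ) : ℕ := ∑ k ∈ Finset.range (n + 1), (n.choose k) ^ 2 * ((n + k).choose k)

open Filter Topology Finset

theorem tendsto_zero_of_le_mul_add {e d : ℕ → ℝ} {q : ℝ} (hq₀ : 0 ≤ q) (hq₁ : q < 1)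
    (he : ∀ n, 0 ≤ e n) (hd : Tendsto d atTop (𝓝 0))
    (hstep : ∀ᶠ n in atTop, e (n + 1) ≤ q * e n + d n) :
    Tendsto e atTop (𝓝 0) := by
  refine tendsto_order.2 ⟨fun a ha => .of_forall fun n => ha.trans_le (he n), fun ε hε => ?_⟩
  have hd' : ∀ᶠ n in atTop, d n < (1 - q) * (ε / 2) :=
    hd.eventually (gt_mem_nhds (by nlinarith))
  obtain ⟨N, hN⟩ := eventually_atTop.1 (hstep.and hd')
  have hcontr : ∀ m, e (N + m) - ε / 2 ≤ q ^ m * (e N - ε / 2) := by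
    intro m
    induction m with
    | zero => simp
    | succ m ih =>
      obtain ⟨hs, hdm⟩ := hN (N + m) (by omega)
      calc e (N + m + 1) - ε / 2 ≤ q * (e (N + m) - ε / 2) := by linarith
        _ ≤ q * (q ^ m * (e N - ε / 2)) := mul_le_mul_of_nonneg_left ih hq₀
        _ = q ^ (m + 1) * (e N - ε / 2) := by ring
  have hgeom : Tendsto (fun m => q ^ m * (e N - ε / 2)) atTop (𝓝 0) := by
    simpa using (tendsto_pow_atTop_nhds_zero_of_lt_one hq₀ hq₁).mul_const (e N - ε / 2)
  obtain ⟨M, hM⟩ := eventually_atTop.1 (hgeom.eventually (gt_mem_nhds (half_pos hε)))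
  refine eventually_atTop.2 ⟨N + M, fun n hn => ?_⟩
  obtain ⟨m, rfl⟩ := Nat.exists_eq_add_of_le (show N ≤ n by omega)
  linarith [hcontr m, hM m (by omega)]

theorem tendsto_of_succ_eq_add_div {x a b : ℕ → ℝ} {A B L c : ℝ}
    (ha : Tendsto a atTop (𝓝 A)) (hb : Tendsto b atTop (𝓝 B)) (hc : 0 < c)
    (hx : ∀ᶠ n in atTop, c ≤ x n) (hL : A + B / L = L) (hBL : |B| < c * L)
    (hrec : ∀ n, x (n + 1) = a n + b n / x n) :
    Tendsto x atTop (𝓝 L) := by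
  have hL₀ : 0 < L := pos_of_mul_pos_right ((abs_nonneg B).trans_lt hBL) hc.le
  have hq : |B| / (c * L) < 1 := (div_lt_one (by positivity)).2 hBL
  have hd : Tendsto (fun n => |a n - A| + |b n - B| / c) atTop (𝓝 0) := by
    have ha' := (ha.sub_const A).abs
    have hb' := ((hb.sub_const B).abs).div_const c
    simpa using ha'.add hb'
  rw [tendsto_iff_dist_tendsto_zero]
  refine tendsto_zero_of_le_mul_add (by positivity) hq (fun _ => dist_nonneg) hd ?_
  filter_upwards [hx] with n hxn
  have hx₀ : 0 < x n := hc.trans_le hxn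
  have hsplit : x (n + 1) - L = (a n - A) + (b n - B) / x n + B * (L - x n) / (x n * L) := by
    rw [hrec]; nth_rw 1 [← hL]; field_simp; ring
  have h₁ : |b n - B| / x n ≤ |b n - B| / c := div_le_div_of_nonneg_left (abs_nonneg _) hc hxn
  have h₂ : |B * (L - x n) / (x n * L)| ≤ |B| / (c * L) * |x n - L| := by
    rw [abs_div, abs_mul, abs_sub_comm, abs_of_pos (by positivity : 0 < x n * L), div_mul_eq_mul_div]
    exact div_le_div_of_nonneg_left (by positivity) (by positivity) (by gcongr)
  simp only [Real.dist_eq]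
  calc |x (n + 1) - L| ≤ |a n - A| + |(b n - B) / x n| + |B * (L - x n) / (x n * L)| := by
        rw [hsplit]; exact abs_add_three _ _ _
    _ ≤ _ := by rw [abs_div, abs_of_pos hx₀]; linarith

theorem Nat.cast_choose_mul_succ_eq {R : Type*} [Ring R] (m k : ℕ) :
    (m.choose k : R) * (m + 1) = (m + 1).choose k * ((m : R) + 1 - k) := by
  rcases le_or_gt k (m + 1) with hk | hk
  · have h := congrArg (Nat.cast (R := R)) (Nat.choose_mul_succ_eq m k)
    push_cast [hk] at h
    exact h
  · rw [Nat.choose_eq_zero_of_lt hk, Nat.choose_eq_zero_of_lt (by omega)]; simp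

theorem Nat.cast_choose_succ_right_eq {R : Type*} [Ring R] (n k : ℕ) :
    (n.choose (k + 1) : R) * (k + 1) = n.choose k * ((n : R) - k) := by
  rcases le_or_gt k n with hk | hk
  · have h := congrArg (Nat.cast (R := R)) (Nat.choose_succ_right_eq n k)
    push_cast [hk] at h
    exact h
  · rw [Nat.choose_eq_zero_of_lt hk, Nat.choose_eq_zero_of_lt (by omega)]; simp

namespace Apery

noncomputable def term (n k : ℕ) : ℝ := (n.choose k : ℝ) ^ 2 * ((n + k).choose k)

theorem term_eq_zero {n k : ℕ} (h : n < k) : term n k = 0 := by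
  simp [term, Nat.choose_eq_zero_of_lt h]

theorem term_succ_left_mul (m k : ℕ) :
    term (m + 1) k * ((m : ℝ) + 1 - k) ^ 2 = term m k * (m + 1) * (m + 1 + k) := by
  have h₁ := Nat.cast_choose_mul_succ_eq (R := ℝ) m k
  have h₂ := Nat.cast_choose_mul_succ_eq (R := ℝ) (m + k) k
  rw [show m + k + 1 = m + 1 + k by ring] at h₂
  push_cast at h₂
  simp only [term]
  linear_combination -((m + 1 + k).choose k : ℝ) *
      ((m + 1).choose k * ((m : ℝ) + 1 - k) + m.choose k * (m + 1)) * h₁ -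
    (m.choose k : ℝ) ^ 2 * (m + 1) * h₂

theorem term_succ_right_mul (n k : ℕ) :
    term n (k + 1) * ((k : ℝ) + 1) ^ 3 = term n k * ((n : ℝ) - k) ^ 2 * (n + k + 1) := by
  have h₁ := Nat.cast_choose_succ_right_eq (R := ℝ) n k
  have h₂ := congrArg (Nat.cast (R := ℝ)) (Nat.add_one_mul_choose_eq (n + k) k)
  push_cast at h₂
  simp only [term, ← add_assoc]
  linear_combination ((n + k + 1).choose (k + 1) : ℝ) * (k + 1) *
      (n.choose (k + 1) * ((k : ℝ) + 1) + n.choose k * ((n : ℝ) - k)) * h₁ -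
    (n.choose k : ℝ) ^ 2 * ((n : ℝ) - k) ^ 2 * h₂

/-- Zeilberger's certificate for Apéry's recurrence. -/
noncomputable def certificate (n k : ℕ) : ℝ :=
  (k : ℝ) ^ 3 * ((k : ℝ) ^ 2 + (6 * n + 7) * k - (11 * n + 15) * (n + 2)) /
    ((n + 2) * (n + 1 + k) * (n + 2 + k)) * term (n + 2) k

theorem recurrence_term_eq_certificate_sub (n k : ℕ) :
    ((n : ℝ) + 2) ^ 2 * term (n + 2) k - (11 * n ^ 2 + 33 * n + 25) * term (n + 1) k
      - ((n : ℝ) + 1) ^ 2 * term n k = certificate n (k + 1) - certificate n k := by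
  have e₁ := term_succ_left_mul n k
  have e₂ := term_succ_left_mul (n + 1) k
  have e₃ := term_succ_right_mul (n + 2) k
  rw [show n + 1 + 1 = n + 2 from rfl] at e₂
  push_cast at e₂ e₃
  have h₁ : term (n + 1) k = term (n + 2) k * ((n : ℝ) + 2 - k) ^ 2 / ((n + 2) * (n + 2 + k)) := by
    rw [eq_div_iff (by positivity)]; linear_combination -e₂
  have h₀ : term n k = term (n + 2) k * (((n : ℝ) + 2 - k) ^ 2 * ((n : ℝ) + 1 - k) ^ 2) /
      ((n + 1) * (n + 2) * (n + 1 + k) * (n + 2 + k)) := by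
    rw [eq_div_iff (by positivity)]
    linear_combination (-((n + 2) * ((n : ℝ) + 2 + k))) * e₁ - ((n : ℝ) + 1 - k) ^ 2 * e₂
  have h₂ : term (n + 2) (k + 1) =
      term (n + 2) k * (((n : ℝ) + 2 - k) ^ 2 * (n + 3 + k)) / ((k : ℝ) + 1) ^ 3 := by
    rw [eq_div_iff (by positivity)]; linear_combination e₃
  rw [certificate, certificate, h₀, h₁, h₂]
  push_cast
  field_simp
  ring

theorem cast_apery_eq_sum (n : ℕ) {m : ℕ} (h : n < m) :
    (apery n : ℝ) = ∑ k ∈ range m, term n k := by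
  rw [apery]
  push_cast
  exact sum_subset (range_subset_range.2 h) fun k _ hk => term_eq_zero (by simp_all)

end Apery

open Apery in
theorem apery_recurrence (n : ℕ) :
    (n + 2) ^ 2 * apery (n + 2) = (11 * n ^ 2 + 33 * n + 25) * apery (n + 1)
      + (n + 1) ^ 2 * apery n := by
  suffices h : ((n : ℝ) + 2) ^ 2 * apery (n + 2) = (11 * n ^ 2 + 33 * n + 25) * apery (n + 1)
      + ((n : ℝ) + 1) ^ 2 * apery n by exact_mod_cast h
  have hsum : ∑ k ∈ range (n + 3), (certificate n (k + 1) - certificate n k) = 0 := by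
    rw [sum_range_sub, certificate, term_eq_zero (by omega)]
    simp [certificate]
  simp only [← recurrence_term_eq_certificate_sub, sum_sub_distrib, ← mul_sum] at hsum
  rw [cast_apery_eq_sum n (m := n + 3) (by omega), cast_apery_eq_sum (n + 1) (m := n + 3) (by omega),
    cast_apery_eq_sum (n + 2) (m := n + 3) (by omega)]
  linarith

theorem apery_pos (n : ℕ) : 0 < apery n :=
  sum_pos' (fun _ _ => Nat.zero_le _) ⟨0, by simp, by simp⟩

theorem apery_le_apery_succ (n : ℕ) : apery n ≤ apery (n + 1) := by
  cases n with
  | zero => decide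
  | succ n =>
    have h := apery_recurrence n
    refine Nat.le_of_mul_le_mul_left ?_ (show 0 < (n + 2) ^ 2 by positivity)
    nlinarith [Nat.zero_le (apery (n + 1))]

theorem apery_ratio_succ (n : ℕ) :
    (apery (n + 2) : ℝ) / apery (n + 1) = (11 * n ^ 2 + 33 * n + 25) / ((n : ℝ) + 2) ^ 2
      + ((n : ℝ) + 1) ^ 2 / ((n : ℝ) + 2) ^ 2 / ((apery (n + 1) : ℝ) / apery n) := by
  have h : ((n : ℝ) + 2) ^ 2 * apery (n + 2) = (11 * n ^ 2 + 33 * n + 25) * apery (n + 1)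
      + ((n : ℝ) + 1) ^ 2 * apery n := by exact_mod_cast apery_recurrence n
  have h₀ : (0 : ℝ) < apery n := by exact_mod_cast apery_pos n
  have h₁ : (0 : ℝ) < apery (n + 1) := by exact_mod_cast apery_pos (n + 1)
  field_simp
  linear_combination h

theorem tendsto_inv_natCast_add_atTop_nhds_zero (c : ℝ) :
    Tendsto (fun n : ℕ => ((n : ℝ) + c)⁻¹) atTop (𝓝 0) :=
  (tendsto_natCast_atTop_atTop.atTop_add tendsto_const_nhds).inv_tendsto_atTop

theorem tendsto_apery_ratio_coeff_const :
    Tendsto (fun n : ℕ => (11 * n ^ 2 + 33 * n + 25) / ((n : ℝ) + 2) ^ 2) atTop (𝓝 11) := by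
  have ht := tendsto_inv_natCast_add_atTop_nhds_zero (2 : ℝ)
  have h := (tendsto_const_nhds (x := (11 : ℝ))).sub (ht.const_mul 11) |>.add ((ht.pow 2).const_mul 3)
  refine (by simpa using h : Tendsto _ _ (𝓝 (11 : ℝ))).congr fun n => ?_
  field_simp
  ring

theorem tendsto_apery_ratio_coeff_inv :
    Tendsto (fun n : ℕ => ((n : ℝ) + 1) ^ 2 / ((n : ℝ) + 2) ^ 2) atTop (𝓝 1) := by
  have ht := tendsto_inv_natCast_add_atTop_nhds_zero (2 : ℝ)
  have h := ((tendsto_const_nhds (x := (1 : ℝ))).sub ht).pow 2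
  refine (by simpa using h : Tendsto _ _ (𝓝 (1 : ℝ))).congr fun n => ?_
  field_simp
  ring

theorem apery_ratio_limit :
    Filter.Tendsto (fun n : ℕ => (apery (n + 1) : ℝ) / (apery n : ℝ))
      Filter.atTop (nhds ((11 + 5 * Real.sqrt 5) / 2)) := by
  have hsqrt : Real.sqrt 5 ^ 2 = 5 := Real.sq_sqrt (by norm_num)
  have hL : 1 < (11 + 5 * Real.sqrt 5) / 2 := by nlinarith [Real.sqrt_nonneg 5]
  refine tendsto_of_succ_eq_add_div tendsto_apery_ratio_coeff_const tendsto_apery_ratio_coeff_inv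
    one_pos (.of_forall fun n => ?ratio_ge_one) ?fixed_point (by simpa using hL) apery_ratio_succ
  case ratio_ge_one =>
    rw [one_le_div (by exact_mod_cast apery_pos n)]
    exact_mod_cast apery_le_apery_succ n
  case fixed_point =>
    field_simp
    nlinarith
end

section
/- For the Franel polynomial g_n(x) = Σ_{k=0}^n C(n,k)^3 x^k, one has lim_{n→∞} g_n''(1)/(n^2 g_n(1)) = 1/4. -/
/-!
Write `c_k = C(n,k)`, `S = Σ c_k³` and `E = Σ (2k - n)² c_k³`. The symmetry `c_k = c_{n-k}` gives
`2 Σ k c_k³ = n S`, hence `4 Σ k(k-1) c_k³ = E + (n² - 2n) S`, and the ratio equals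
`1/4 - 1/(2n) + E/(4n²S)`. As `k` moves away from `n/2`, `(2k - n)²` grows while `c_k²` shrinks, so
Chebyshev's sum inequality with the binomial weights `c_k` bounds `E/S` by the binomial variance
`Σ (2k - n)² c_k / 2ⁿ = n`. The error term is therefore at most `1/(4n)`.
-/

open Finset Filter Topology

section Chebyshev

variable {ι R : Type*} [CommRing R] [LinearOrder R] [IsStrictOrderedRing R]
  {s : Finset ι} {w f g : ι → R}

theorem AntivaryOn.sum_mul_sum_mul_le (hw : ∀ i ∈ s, 0 ≤ w i) (hfg : AntivaryOn f g s) :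
    (∑ i ∈ s, w i) * ∑ i ∈ s, w i * f i * g i ≤ (∑ i ∈ s, w i * f i) * ∑ i ∈ s, w i * g i := by
  have hdouble : ∑ i ∈ s, ∑ j ∈ s, w i * w j * ((f j - f i) * (g j - g i)) ≤ 0 :=
    sum_nonpos fun i hi ↦ sum_nonpos fun j hj ↦
      mul_nonpos_of_nonneg_of_nonpos (mul_nonneg (hw i hi) (hw j hj)) (hfg.sub_mul_sub_nonpos hi hj)
  have hexpand : ∑ i ∈ s, ∑ j ∈ s, w i * w j * ((f j - f i) * (g j - g i)) =
      (∑ i ∈ s, w i) * (∑ i ∈ s, w i * f i * g i) + (∑ i ∈ s, w i * f i * g i) * (∑ i ∈ s, w i)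
        - (∑ i ∈ s, w i * f i) * (∑ i ∈ s, w i * g i)
        - (∑ i ∈ s, w i * g i) * (∑ i ∈ s, w i * f i) := by
    simp only [sum_mul_sum, ← sum_add_distrib, ← sum_sub_distrib]
    exact sum_congr rfl fun i _ ↦ sum_congr rfl fun j _ ↦ by ring
  linarith

end Chebyshev

namespace Nat

theorem choose_le_choose_of_le_of_le_half {n a b : ℕ} (hab : a ≤ b) (hb : b ≤ n / 2) :
    n.choose a ≤ n.choose b := by
  induction b, hab using Nat.le_induction with
  | base => rfl
  | succ b _ ih => exact (ih (by omega)).trans (choose_le_succ_of_lt_half_left (by omega))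

theorem choose_le_choose_of_sq_two_mul_sub_le {n i j : ℕ}
    (h : (2 * (i : ℤ) - n) ^ 2 ≤ (2 * (j : ℤ) - n) ^ 2) : n.choose j ≤ n.choose i := by
  rw [sq_le_sq] at h
  rcases le_or_gt j n with hj | hj
  · have hi : i ≤ n := by
      rcases abs_cases (2 * (i : ℤ) - n) with hi | hi <;>
        rcases abs_cases (2 * (j : ℤ) - n) with hj' | hj' <;> omega
    have hmin : ∀ k ≤ n, n.choose k = n.choose (min k (n - k)) := fun k hk ↦ by
      rcases le_total k (n - k) with hle | hle
      · rw [min_eq_left hle]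
      · rw [min_eq_right hle, choose_symm hk]
    rw [hmin j hj, hmin i hi]
    apply choose_le_choose_of_le_of_le_half <;>
      rcases abs_cases (2 * (i : ℤ) - n) with hi | hi <;>
        rcases abs_cases (2 * (j : ℤ) - n) with hj' | hj' <;> omega
  · rw [choose_eq_zero_of_lt hj]
    exact zero_le _

end Nat

theorem antivary_sq_two_mul_sub_choose_sq (n : ℕ) :
    Antivary (fun k : ℕ ↦ (2 * (k : ℝ) - n) ^ 2) (fun k ↦ (n.choose k : ℝ) ^ 2) := by
  intro i j hij
  by_contra! hlt
  have hle : n.choose j ≤ n.choose i :=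
    Nat.choose_le_choose_of_sq_two_mul_sub_le (by exact_mod_cast hlt.le)
  have : (n.choose j : ℝ) ^ 2 ≤ (n.choose i : ℝ) ^ 2 := by gcongr
  linarith

theorem sum_range_cast_choose {R : Type*} [CommSemiring R] (n : ℕ) :
    ∑ k ∈ range (n + 1), (n.choose k : R) = 2 ^ n := by
  rw [← Nat.cast_sum, Nat.sum_range_choose, Nat.cast_pow, Nat.cast_ofNat]

theorem two_mul_sum_range_mul_comp_choose {R : Type*} [CommSemiring R] (n : ℕ) (f : ℕ → R) :
    2 * ∑ k ∈ range (n + 1), (k : R) * f (n.choose k) =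
      n * ∑ k ∈ range (n + 1), f (n.choose k) := by
  have hreflect : ∑ k ∈ range (n + 1), (k : R) * f (n.choose k) =
      ∑ k ∈ range (n + 1), ((n - k : ℕ) : R) * f (n.choose k) :=
    (sum_range_reflect _ _).symm.trans <| sum_congr rfl fun k hk ↦ by
      rw [add_tsub_cancel_right, Nat.choose_symm (mem_range_succ_iff.mp hk)]
  rw [two_mul]
  nth_rw 2 [hreflect]
  rw [← sum_add_distrib, mul_sum]
  refine sum_congr rfl fun k hk ↦ ?_
  rw [← add_mul, ← Nat.cast_add, Nat.add_sub_cancel' (mem_range_succ_iff.mp hk)]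

theorem sum_range_choose_mul_two_mul_sub_sq {R : Type*} [CommRing R] (n : ℕ) :
    ∑ k ∈ range (n + 1), (n.choose k : R) * (2 * k - n) ^ 2 = (n : R) * 2 ^ n := by
  induction n with
  | zero => simp
  | succ n ih =>
    have hpascal := sum_choose_succ_mul (fun i _ ↦ (2 * (i : R) - (n + 1)) ^ 2) n
    push_cast at hpascal ⊢
    refine hpascal.trans ?_
    calc _ = ∑ k ∈ range (n + 1),
          (2 * ((n.choose k : R) * (2 * k - n) ^ 2) + 2 * n.choose k) := by
          rw [← sum_add_distrib]
          exact sum_congr rfl fun k _ ↦ by ring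
      _ = ((n : R) + 1) * 2 ^ (n + 1) := by
          rw [sum_add_distrib, ← mul_sum, ← mul_sum, ih, sum_range_cast_choose]
          ring

noncomputable def franel (n : ℕ) : ℝ := ∑ k ∈ range (n + 1), (n.choose k : ℝ) ^ 3

noncomputable def franelSecondMoment (n : ℕ) : ℝ :=
  ∑ k ∈ range (n + 1), (k : ℝ) * (k - 1) * (n.choose k : ℝ) ^ 3

noncomputable def franelCentralMoment (n : ℕ) : ℝ :=
  ∑ k ∈ range (n + 1), (2 * (k : ℝ) - n) ^ 2 * (n.choose k : ℝ) ^ 3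

theorem franel_pos (n : ℕ) : 0 < franel n :=
  sum_pos' (fun _ _ ↦ by positivity) ⟨0, by simp⟩

theorem four_mul_franelSecondMoment (n : ℕ) :
    4 * franelSecondMoment n = franelCentralMoment n + (n ^ 2 - 2 * n) * franel n := by
  have hsymm := two_mul_sum_range_mul_comp_choose n (fun c ↦ (c : ℝ) ^ 3)
  have hsplit : 4 * franelSecondMoment n = franelCentralMoment n
      + 2 * (n - 1) * (2 * ∑ k ∈ range (n + 1), (k : ℝ) * (n.choose k : ℝ) ^ 3)
      - n ^ 2 * franel n := by
    simp only [franelSecondMoment, franelCentralMoment, franel, mul_sum, ← sum_add_distrib,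
      ← sum_sub_distrib]
    exact sum_congr rfl fun k _ ↦ by ring
  rw [hsplit, hsymm, franel]
  ring

theorem franelCentralMoment_nonneg (n : ℕ) : 0 ≤ franelCentralMoment n :=
  sum_nonneg fun _ _ ↦ by positivity

theorem franelCentralMoment_le (n : ℕ) : franelCentralMoment n ≤ n * franel n := by
  have hcheb := (antivary_sq_two_mul_sub_choose_sq n).antivaryOn (range (n + 1))
    |>.sum_mul_sum_mul_le (w := fun k ↦ (n.choose k : ℝ)) fun _ _ ↦ by positivity
  have hcentral :
      ∑ k ∈ range (n + 1), (n.choose k : ℝ) * (2 * k - n) ^ 2 * (n.choose k : ℝ) ^ 2 =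
        franelCentralMoment n :=
    sum_congr rfl fun k _ ↦ by ring
  have hfranel : ∑ k ∈ range (n + 1), (n.choose k : ℝ) * (n.choose k : ℝ) ^ 2 = franel n :=
    sum_congr rfl fun k _ ↦ by ring
  rw [sum_range_cast_choose, hcentral, hfranel, sum_range_choose_mul_two_mul_sub_sq, mul_assoc,
    mul_left_comm] at hcheb
  exact le_of_mul_le_mul_left hcheb (by positivity)

theorem franelSecondMoment_div_eq {n : ℕ} (hn : n ≠ 0) :
    franelSecondMoment n / (n ^ 2 * franel n) =
      1 / 4 - (1 / 2) / n + franelCentralMoment n / (4 * n ^ 2 * franel n) := by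
  have := franel_pos n
  field_simp
  linear_combination 2 * four_mul_franelSecondMoment n

theorem tendsto_franelCentralMoment_div :
    Tendsto (fun n : ℕ ↦ franelCentralMoment n / (4 * n ^ 2 * franel n)) atTop (𝓝 0) := by
  refine squeeze_zero' (Eventually.of_forall fun n ↦ ?_) ?_
    (tendsto_const_div_atTop_nhds_zero_nat (1 / 4))
  · have := franel_pos n
    exact div_nonneg (franelCentralMoment_nonneg n) (by positivity)
  · filter_upwards [eventually_ne_atTop 0] with n hn
    have := franel_pos n
    rw [div_le_div_iff₀ (by positivity) (by positivity)]
    nlinarith [franelCentralMoment_le n]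

theorem franel_second_moment_limit :
    Filter.Tendsto
      (fun n : ℕ =>
        (∑ k ∈ Finset.range (n + 1), (k : ℝ) * (k - 1) * ((n.choose k : ℕ) : ℝ) ^ 3) /
          ((n : ℝ) ^ 2 * ∑ k ∈ Finset.range (n + 1), ((n.choose k : ℕ) : ℝ) ^ 3))
      Filter.atTop (nhds (1 / 4)) := by
  change Tendsto (fun n : ℕ ↦ franelSecondMoment n / (n ^ 2 * franel n)) atTop (𝓝 (1 / 4))
  have hlim := ((tendsto_const_nhds (x := (1 / 4 : ℝ))).sub
    (tendsto_const_div_atTop_nhds_zero_nat (1 / 2))).add tendsto_franelCentralMoment_div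
  rw [sub_zero, add_zero] at hlim
  refine hlim.congr' ?_
  filter_upwards [eventually_ne_atTop 0] with n hn
  exact (franelSecondMoment_div_eq hn).symm
end
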